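/- arXiv:1703.06047 — 5 statements merged into one kernel-verified Lean document; each statement's English description precedes it below -/
import Mathlib

section
/- For any integer q ≥ 3 and any even integer d ≥ 2, χ(T_q, d) ≤ d + q + 1, where χ(T_q, d) is the chromatic number of the exact d-th power of the infinite q-regular tree. -/
/-- The exact `d`-th power of a graph `G`: same vertices, adjacency iff the
distance in `G` is exactly `d`. -/
def exactDistGraph {V : Type*} (G : SimpleGraph V) (d : ℕ) : SimpleGraph V where
  Adj u v := u ≠ v ∧ G.dist u v = d
  symm := by
    constructor
    intro u v h
    exact ⟨h.1.symm, by rw [SimpleGraph.dist_comm]; exact h.2⟩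
  loopless := by
    constructor
    intro u h
    exact h.1 rfl

/-!
Root the tree at `r` and write `d = 2n + 2`. Colour the vertices greedily, level by level, so that
each vertex avoids the colours of its `d` nearest ancestors and siblings receive distinct colours;
as a vertex has at most `q` children, `d + q` colours suffice. Then give `v` the greedy colour of
its ancestor `n` levels up. If `u` and `v` are at distance `d` and their paths to the root meet
`a` and `b` levels above them, either `a = b = n + 1` and the two chosen ancestors are distinct
siblings, or, say, `a > b` and the ancestor chosen for `v` lies between `2` and `d` levels above
the one chosen for `u`.
-/

theorem Set.Finite.exists_injOn_mapsTo_compl {α β : Type*} [Finite β] [Nonempty β] {s : Set α}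
    {t : Set β} (hs : s.Finite) (hst : s.ncard + t.ncard ≤ Nat.card β) :
    ∃ f : α → β, s.InjOn f ∧ s.MapsTo f tᶜ := by
  have hle : s.encard ≤ tᶜ.encard := by
    rw [← hs.cast_ncard_eq, ← tᶜ.toFinite.cast_ncard_eq, Set.ncard_compl t]
    exact_mod_cast Nat.le_sub_of_add_le hst
  obtain ⟨f, hmaps, hinj⟩ := hs.exists_injOn_of_encard_le hle
  exact ⟨f, hinj, hmaps⟩

namespace SimpleGraph

variable {V : Type*} {G : SimpleGraph V} {r u v x z : V} {a b j k : ℕ}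

open Classical in
/-- The vertex `k` steps above `v` in the tree rooted at `r`, or `r` itself when `k` exceeds the
depth of `v`. -/
noncomputable def ancestor (G : SimpleGraph V) (r : V) (k : ℕ) (v : V) : V :=
  if h : ∃ z, G.dist v z = k ∧ G.dist r z + k = G.dist r v then h.choose else r

lemma dist_root_ancestor_le : G.dist r (G.ancestor r k v) ≤ G.dist r v := by
  unfold ancestor
  split_ifs with h
  · have := h.choose_spec.2
    omega
  · simp

lemma dist_root_ancestor_lt (hk : k ≠ 0) (hv : G.dist r v ≠ 0) :
    G.dist r (G.ancestor r k v) < G.dist r v := by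
  unfold ancestor
  split_ifs with h
  · have := h.choose_spec.2
    omega
  · simpa [Nat.pos_iff_ne_zero] using hv

namespace Connected

variable (hc : G.Connected)
include hc

lemma exists_dist_eq_and_dist_root_add_eq (hk : k ≤ G.dist r v) :
    ∃ z, G.dist v z = k ∧ G.dist r z + k = G.dist r v := by
  obtain ⟨p, hp⟩ := hc.exists_walk_length_eq_dist r v
  have hrz : G.dist r (p.getVert (G.dist r v - k)) ≤ G.dist r v - k := by
    simpa [hp] using dist_le (p.take (G.dist r v - k))
  have hzv : G.dist (p.getVert (G.dist r v - k)) v ≤ G.dist r v - (G.dist r v - k) := by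
    simpa [hp] using dist_le (p.drop (G.dist r v - k))
  have hrv : G.dist r v ≤ G.dist r (p.getVert (G.dist r v - k)) +
      G.dist (p.getVert (G.dist r v - k)) v := hc.dist_triangle
  refine ⟨p.getVert (G.dist r v - k), ?_, by omega⟩
  rw [dist_comm]
  omega

lemma ancestor_spec (hk : k ≤ G.dist r v) :
    G.dist v (G.ancestor r k v) = k ∧ G.dist r (G.ancestor r k v) + k = G.dist r v := by
  have h := hc.exists_dist_eq_and_dist_root_add_eq hk
  rw [ancestor, dif_pos h]
  exact h.choose_spec

lemma ancestor_of_dist_root_le (hk : G.dist r v ≤ k) : G.ancestor r k v = r := by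
  unfold ancestor
  split_ifs with h
  · have := h.choose_spec.2
    exact (hc.dist_eq_zero_iff.mp (by omega)).symm
  · rfl

lemma dist_root_ancestor : G.dist r (G.ancestor r k v) = G.dist r v - k := by
  rcases le_total k (G.dist r v) with hk | hk
  · have := (hc.ancestor_spec hk).2
    omega
  · rw [hc.ancestor_of_dist_root_le hk, dist_self]
    omega

lemma ancestor_zero : G.ancestor r 0 v = v :=
  (hc.dist_eq_zero_iff.mp (hc.ancestor_spec (Nat.zero_le _)).1).symm

lemma dist_le_of_ancestor_eq (ha : a ≤ G.dist r u) (hb : b ≤ G.dist r v)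
    (h : G.ancestor r a u = G.ancestor r b v) : G.dist u v ≤ a + b := by
  calc G.dist u v ≤ G.dist u (G.ancestor r a u) + G.dist (G.ancestor r b v) v := by
        rw [h]; exact hc.dist_triangle
    _ = a + b := by rw [(hc.ancestor_spec ha).1, dist_comm, (hc.ancestor_spec hb).1]

end Connected

def children (G : SimpleGraph V) (r z : V) : Set V :=
  {x | G.dist r x ≠ 0 ∧ G.ancestor r 1 x = z}

lemma Connected.children_subset_neighborSet (hc : G.Connected) (r z : V) :
    G.children r z ⊆ G.neighborSet z := by
  rintro x ⟨hx, rfl⟩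
  exact (dist_eq_one_iff_adj.mp (hc.ancestor_spec (by omega)).1).symm

namespace IsTree

variable (hT : G.IsTree)
include hT

lemma eq_of_dist_add_dist_eq_dist {z' : V} (hz : G.dist u z + G.dist z v = G.dist u v)
    (hz' : G.dist u z' + G.dist z' v = G.dist u v) (h : G.dist u z = G.dist u z') : z = z' := by
  obtain ⟨p, hp⟩ := hT.connected.exists_walk_length_eq_dist u z
  obtain ⟨q, hq⟩ := hT.connected.exists_walk_length_eq_dist z v
  obtain ⟨p', hp'⟩ := hT.connected.exists_walk_length_eq_dist u z'
  obtain ⟨q', hq'⟩ := hT.connected.exists_walk_length_eq_dist z' v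
  have hpath := (p.append q).isPath_of_length_eq_dist (by rw [Walk.length_append, hp, hq, hz])
  have hpath' := (p'.append q').isPath_of_length_eq_dist
    (by rw [Walk.length_append, hp', hq', hz'])
  have heq : p.append q = p'.append q' :=
    congrArg Subtype.val ((hT.isAcyclic.subsingleton_path u v).elim ⟨_, hpath⟩ ⟨_, hpath'⟩)
  have hget : (p.append q).getVert (G.dist u z) = (p'.append q').getVert (G.dist u z') := by
    rw [heq, h]
  rwa [Walk.getVert_append', if_pos hp.ge, ← hp, Walk.getVert_length, Walk.getVert_append',
    if_pos hp'.ge, ← hp', Walk.getVert_length] at hget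

lemma eq_ancestor (h1 : G.dist v z = k) (h2 : G.dist r z + k = G.dist r v) :
    z = G.ancestor r k v := by
  have hanc := hT.connected.ancestor_spec (r := r) (v := v) (k := k) (by omega)
  refine hT.eq_of_dist_add_dist_eq_dist (v := r) ?_ ?_ (h1.trans hanc.1.symm) <;>
    rw [dist_comm (u := v) (v := r), dist_comm (v := r)] <;> omega

lemma ancestor_ancestor : G.ancestor r j (G.ancestor r k v) = G.ancestor r (j + k) v := by
  have hc := hT.connected
  rcases le_or_gt (j + k) (G.dist r v) with hjk | hjk
  · obtain ⟨hvw, hw⟩ := hc.ancestor_spec (r := r) (v := v) (k := k) (by omega)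
    obtain ⟨hwy, hy⟩ := hc.ancestor_spec (r := r) (v := G.ancestor r k v) (k := j) (by omega)
    refine hT.eq_ancestor ?_ (by omega)
    have hle : G.dist v (G.ancestor r j (G.ancestor r k v)) ≤ G.dist v (G.ancestor r k v) +
        G.dist (G.ancestor r k v) (G.ancestor r j (G.ancestor r k v)) := hc.dist_triangle
    have hge : G.dist r v ≤ G.dist r (G.ancestor r j (G.ancestor r k v)) +
        G.dist (G.ancestor r j (G.ancestor r k v)) v := hc.dist_triangle
    rw [dist_comm (u := G.ancestor r j _)] at hge
    omega
  · rw [hc.ancestor_of_dist_root_le (k := j + k) (by omega), hc.ancestor_of_dist_root_le]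
    rw [hc.dist_root_ancestor]
    omega

lemma exists_ancestor_eq_ancestor (r u v : V) :
    ∃ a b, a + b = G.dist u v ∧ a ≤ G.dist r u ∧ b ≤ G.dist r v ∧
      G.ancestor r a u = G.ancestor r b v := by
  have hc := hT.connected
  obtain ⟨D, hD⟩ : ∃ D, G.dist u v = D := ⟨_, rfl⟩
  induction D generalizing u with
  | zero =>
    obtain rfl := hc.dist_eq_zero_iff.mp hD
    exact ⟨0, 0, hD.symm, Nat.zero_le _, Nat.zero_le _, rfl⟩
  | succ D ih =>
    obtain ⟨p, hp⟩ := hc.exists_walk_length_eq_dist u v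
    have hnil : ¬p.Nil := fun h => by
      rw [Walk.length_eq_zero_iff.mpr h] at hp
      omega
    have hux : G.Adj u p.snd := p.adj_snd hnil
    have hxv : G.dist p.snd v = D := by
      have hle := dist_le p.tail
      have htri : G.dist u v ≤ G.dist u p.snd + G.dist p.snd v := hc.dist_triangle
      rw [dist_eq_one_iff_adj.mpr hux] at htri
      have := Walk.length_tail_add_one hnil
      omega
    obtain ⟨a, b, hab, ha, hb, hw⟩ := ih p.snd hxv
    rcases hT.dist_eq_dist_add_one_of_adj r hux with hu | hx
    · have hpar : p.snd = G.ancestor r 1 u :=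
        hT.eq_ancestor (dist_eq_one_iff_adj.mpr hux) hu.symm
      refine ⟨a + 1, b, by omega, by omega, hb, ?_⟩
      rw [← hT.ancestor_ancestor, ← hpar, hw]
    · have hpar : u = G.ancestor r 1 p.snd :=
        hT.eq_ancestor (dist_eq_one_iff_adj.mpr hux.symm) hx.symm
      rcases a with _ | a
      · rw [hc.ancestor_zero] at hw
        have hlev := hc.dist_root_ancestor (r := r) (v := v) (k := b)
        rw [← hw] at hlev
        refine ⟨0, b + 1, by omega, Nat.zero_le _, by omega, ?_⟩
        rw [hc.ancestor_zero, add_comm, ← hT.ancestor_ancestor, ← hw, ← hpar]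
      · have hw' : G.ancestor r a u = G.ancestor r b v := by
          rw [hpar, hT.ancestor_ancestor, hw]
        have := hc.dist_le_of_ancestor_eq (by omega) hb hw'
        omega

end IsTree

section Greedy

variable {α : Type*} [Inhabited α] {d : ℕ}

noncomputable def childColoring (G : SimpleGraph V) (r z : V) (F : Set α) : V → α :=
  Classical.epsilon fun f : V → α => (G.children r z).InjOn f ∧ (G.children r z).MapsTo f Fᶜ

lemma childColoring_spec [Finite α] {F : Set α} (hfin : (G.children r z).Finite)
    (hcard : (G.children r z).ncard + F.ncard ≤ Nat.card α) :
    (G.children r z).InjOn (G.childColoring r z F) ∧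
      (G.children r z).MapsTo (G.childColoring r z F) Fᶜ :=
  Classical.epsilon_spec (hfin.exists_injOn_mapsTo_compl hcard)

noncomputable def greedyColoring (G : SimpleGraph V) (r : V) (d : ℕ) (x : V) : α :=
  if G.dist r x = 0 then default
  else G.childColoring r (G.ancestor r 1 x)
    (Set.range fun j : Fin d => greedyColoring G r d (G.ancestor r j (G.ancestor r 1 x))) x
termination_by G.dist r x
decreasing_by exact dist_root_ancestor_le.trans_lt (dist_root_ancestor_lt one_ne_zero ‹_›)

lemma greedyColoring_eq_childColoring (hx : x ∈ G.children r z) :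
    (G.greedyColoring r d x : α) = G.childColoring r z
      (Set.range fun j : Fin d => G.greedyColoring r d (G.ancestor r j z)) x := by
  obtain ⟨hx, rfl⟩ := hx
  rw [greedyColoring, if_neg hx]

variable [Finite α] (hfin : ∀ z, (G.children r z).Finite)
  (hcard : ∀ z, (G.children r z).ncard + d ≤ Nat.card α)
include hfin hcard

lemma greedyColoring_spec (z : V) :
    (G.children r z).InjOn (G.greedyColoring r d : V → α) ∧
      ∀ x ∈ G.children r z, ∀ j < d,
        (G.greedyColoring r d x : α) ≠ G.greedyColoring r d (G.ancestor r j z) := by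
  have hF :
      (Set.range fun j : Fin d => (G.greedyColoring r d (G.ancestor r j z) : α)).ncard ≤ d := by
    rw [← Set.image_univ]
    exact (Set.ncard_image_le Set.finite_univ).trans (by simp)
  obtain ⟨hinj, hmaps⟩ := childColoring_spec (F := Set.range fun j : Fin d =>
    (G.greedyColoring r d (G.ancestor r j z) : α)) (hfin z) (by have := hcard z; omega)
  refine ⟨fun x hx y hy hxy => hinj hx hy ?_, fun x hx j hj heq => hmaps hx ⟨⟨j, hj⟩, ?_⟩⟩
  · rwa [greedyColoring_eq_childColoring hx, greedyColoring_eq_childColoring hy] at hxy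
  · rw [← greedyColoring_eq_childColoring hx, heq]

lemma IsTree.greedyColoring_ne_ancestor (hT : G.IsTree) (hx : G.dist r x ≠ 0) (hk : k ≠ 0)
    (hkd : k ≤ d) : (G.greedyColoring r d x : α) ≠ G.greedyColoring r d (G.ancestor r k x) := by
  have h := (greedyColoring_spec hfin hcard _).2 x ⟨hx, rfl⟩ (k - 1) (by omega)
  rwa [hT.ancestor_ancestor, Nat.sub_add_cancel (Nat.one_le_iff_ne_zero.mpr hk)] at h

end Greedy

namespace IsTree

variable {α : Type*} (hT : G.IsTree) {φ : V → α} {n : ℕ}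
  (hanc : ∀ x k, G.dist r x ≠ 0 → k ≠ 0 → k ≤ 2 * n + 2 → φ x ≠ φ (G.ancestor r k x))
  (hsib : ∀ z, (G.children r z).InjOn φ)
include hT

include hanc in
lemma apply_ancestor_ne_of_lt (hab : a + b = 2 * n + 2) (hba : b < a) (ha : a ≤ G.dist r u)
    (hw : G.ancestor r a u = G.ancestor r b v) :
    φ (G.ancestor r n u) ≠ φ (G.ancestor r n v) := by
  have hv : G.ancestor r n v = G.ancestor r (a - b) (G.ancestor r n u) :=
    calc G.ancestor r n v = G.ancestor r (n - b) (G.ancestor r b v) := by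
          rw [hT.ancestor_ancestor, Nat.sub_add_cancel (by omega)]
      _ = G.ancestor r (n - b) (G.ancestor r a u) := by rw [hw]
      _ = G.ancestor r (a - b) (G.ancestor r n u) := by
          rw [hT.ancestor_ancestor, hT.ancestor_ancestor]
          congr 1
          omega
  rw [hv]
  exact hanc _ _ (by rw [hT.connected.dist_root_ancestor]; omega) (by omega) (by omega)

include hsib in
lemma apply_ancestor_ne_of_eq (huv : G.dist u v = 2 * n + 2) (ha : a + a = 2 * n + 2)
    (hau : a ≤ G.dist r u) (hav : a ≤ G.dist r v) (hw : G.ancestor r a u = G.ancestor r a v) :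
    φ (G.ancestor r n u) ≠ φ (G.ancestor r n v) := by
  obtain rfl : a = n + 1 := by omega
  have hc := hT.connected
  have hmem {w : V} (hdepth : n + 1 ≤ G.dist r w) :
      G.ancestor r n w ∈ G.children r (G.ancestor r (n + 1) w) :=
    ⟨by rw [hc.dist_root_ancestor]; omega, by rw [hT.ancestor_ancestor, add_comm]⟩
  have hne : G.ancestor r n u ≠ G.ancestor r n v := fun h => by
    have := hc.dist_le_of_ancestor_eq (by omega) (by omega) h
    omega
  exact fun h => hne (hsib _ (hmem hau) (by rw [hw]; exact hmem hav) h)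

include hanc hsib in
theorem nonempty_coloring_exactDistGraph :
    Nonempty ((exactDistGraph G (2 * n + 2)).Coloring α) := by
  refine ⟨Coloring.mk (fun v => φ (G.ancestor r n v)) fun {u v} huv => ?_⟩
  obtain ⟨a, b, hab, ha, hb, hw⟩ := hT.exists_ancestor_eq_ancestor r u v
  rw [huv.2] at hab
  rcases lt_trichotomy a b with hlt | rfl | hgt
  · exact (hT.apply_ancestor_ne_of_lt hanc (by omega) hlt hb hw.symm).symm
  · exact hT.apply_ancestor_ne_of_eq hsib huv.2 hab ha hb hw
  · exact hT.apply_ancestor_ne_of_lt hanc hab hgt ha hw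

end IsTree

end SimpleGraph

/-- For `q ≥ 3` and even `d ≥ 2`, the exact `d`-th power of the infinite
`q`-regular tree is `(d + q + 1)`-colorable, i.e. `χ(T_q, d) ≤ d + q + 1`. -/
theorem exactPower_regular_tree_colorable_add {V : Type*}
    (G : SimpleGraph V) (q d : ℕ) (hq : 3 ≤ q)
    (htree : G.IsTree) (hreg : ∀ v : V, (G.neighborSet v).ncard = q)
    (hd : Even d) (hd2 : 2 ≤ d) :
    (exactDistGraph G d).Colorable (d + q + 1) := by
  obtain ⟨r⟩ := htree.connected.nonempty
  obtain ⟨n, rfl⟩ : ∃ n, d = 2 * n + 2 := by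
    obtain ⟨h, rfl⟩ := hd
    exact ⟨h - 1, by omega⟩
  have hnbr (z : V) : (G.neighborSet z).Finite :=
    Set.finite_of_ncard_ne_zero (by rw [hreg]; omega)
  have hsub (z : V) := htree.connected.children_subset_neighborSet r z
  have hfin (z : V) : (G.children r z).Finite := (hnbr z).subset (hsub z)
  have hcard (z : V) :
      (G.children r z).ncard + (2 * n + 2) ≤ Nat.card (Fin (2 * n + 2 + q + 1)) := by
    have := Set.ncard_le_ncard (hsub z) (hnbr z)
    rw [hreg] at this
    simp only [Nat.card_eq_fintype_card, Fintype.card_fin]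
    omega
  exact htree.nonempty_coloring_exactDistGraph
    (fun _ _ hx hk hkd => htree.greedyColoring_ne_ancestor hfin hcard hx hk hkd)
    fun z => (SimpleGraph.greedyColoring_spec hfin hcard z).1
end

section
/- For any integer q ≥ 3 and any even integer d ≥ 2, χ(T_q^d, d) ≥ log_2(d/4 + q - 1), where T_q^d is the complete (q-1)-ary tree of depth d. -/
open SimpleGraph

section Aux

variable {V : Type*} {G : SimpleGraph V} {r : V}

/-- A path in a tree has length equal to the distance between its endpoints. -/
lemma cadt_path_length (htree : G.IsTree) {u z : V} (W : G.Walk u z) (hW : W.IsPath) :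
    W.length = G.dist u z := by
  obtain ⟨P, hP, hlen⟩ := htree.isConnected.exists_path_of_dist u z
  have := (htree.existsUnique_path u z).unique hW hP
  rw [this, hlen]

lemma cadt_adj_dist_le {u v : V} (h : G.Adj u v) : G.dist u v ≤ 1 := by
  simpa using SimpleGraph.dist_le h.toWalk

/-- In a "descending" walk (length = difference of distances to the root), every
vertex of the support is at least as deep as the start. -/
lemma cadt_desc_support (htree : G.IsTree) :
    ∀ {u z : V} (W : G.Walk u z), W.length + G.dist r u = G.dist r z →
      ∀ x ∈ W.support, G.dist r u ≤ G.dist r x := by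
  intro u z W
  induction W with
  | nil => intro _ x hx; simp at hx; subst hx; exact le_rfl
  | @cons a m z h W' ih =>
    intro hlen x hx
    have hm1 : G.dist r m ≤ G.dist r a + 1 := by
      have h1 := htree.isConnected.dist_triangle (u := r) (v := a) (w := m)
      have h2 := cadt_adj_dist_le h
      omega
    have hz : G.dist r z ≤ G.dist r m + W'.length := by
      have h1 := htree.isConnected.dist_triangle (u := r) (v := m) (w := z)
      have h2 := SimpleGraph.dist_le W'
      omega
    have hlen' : W'.length + G.dist r m = G.dist r z := by
      simp only [SimpleGraph.Walk.length_cons] at hlen; omega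
    rcases List.mem_cons.mp (by simpa using hx) with h1 | h2
    · subst h1; exact le_rfl
    · have := ih hlen' x h2
      simp only [SimpleGraph.Walk.length_cons] at hlen
      omega

lemma cadt_desc_isPath (htree : G.IsTree) :
    ∀ {u z : V} (W : G.Walk u z), W.length + G.dist r u = G.dist r z → W.IsPath := by
  intro u z W
  induction W with
  | nil => intro _; exact SimpleGraph.Walk.IsPath.nil
  | @cons a m z h W' ih =>
    intro hlen
    have hm1 : G.dist r m ≤ G.dist r a + 1 := by
      have h1 := htree.isConnected.dist_triangle (u := r) (v := a) (w := m)
      have h2 := cadt_adj_dist_le h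
      omega
    have hz : G.dist r z ≤ G.dist r m + W'.length := by
      have h1 := htree.isConnected.dist_triangle (u := r) (v := m) (w := z)
      have h2 := SimpleGraph.dist_le W'
      omega
    have hlen' : W'.length + G.dist r m = G.dist r z := by
      simp only [SimpleGraph.Walk.length_cons] at hlen; omega
    have hm : G.dist r m = G.dist r a + 1 := by
      simp only [SimpleGraph.Walk.length_cons] at hlen; omega
    refine (SimpleGraph.Walk.cons_isPath_iff h W').mpr ⟨ih hlen', ?_⟩
    intro hmem
    have := cadt_desc_support htree W' hlen' a hmem
    omega

lemma cadt_below_walk (htree : G.IsTree) {v u : V}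
    (h : G.dist r v + G.dist v u = G.dist r u) :
    ∃ W : G.Walk v u, W.length + G.dist r v = G.dist r u := by
  obtain ⟨W, _, hlen⟩ := htree.isConnected.exists_path_of_dist v u
  exact ⟨W, by omega⟩

lemma cadt_walk_below (htree : G.IsTree) {v u : V} (W : G.Walk v u)
    (h : W.length + G.dist r v = G.dist r u) :
    G.dist r v + G.dist v u = G.dist r u := by
  have h1 : G.dist v u ≤ W.length := SimpleGraph.dist_le W
  have h2 : G.dist r u ≤ G.dist r v + G.dist v u := htree.isConnected.dist_triangle
  omega

lemma cadt_below_child (htree : G.IsTree) {v w : V} (h : G.Adj v w)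
    (hd : G.dist r w = G.dist r v + 1) : G.dist r v + G.dist v w = G.dist r w := by
  have h1 : G.dist v w ≤ 1 := cadt_adj_dist_le h
  have h2 : G.dist r w ≤ G.dist r v + G.dist v w := htree.isConnected.dist_triangle
  omega

lemma cadt_below_trans (htree : G.IsTree) {a b e : V}
    (h1 : G.dist r a + G.dist a b = G.dist r b)
    (h2 : G.dist r b + G.dist b e = G.dist r e) :
    G.dist r a + G.dist a e = G.dist r e := by
  have h3 : G.dist a e ≤ G.dist a b + G.dist b e := htree.isConnected.dist_triangle
  have h4 : G.dist r e ≤ G.dist r a + G.dist a e := htree.isConnected.dist_triangle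
  omega

/-- The key splitting lemma: if `x` lies below child `w` of `p` and `y` below a
different child `w'`, then `dist x y = dist x p + dist p y`. -/
lemma cadt_split (htree : G.IsTree) {p w w' x y : V} (hne : w ≠ w')
    (haw : G.Adj p w) (haw' : G.Adj p w')
    (hdw : G.dist r w = G.dist r p + 1) (hdw' : G.dist r w' = G.dist r p + 1)
    (hbx : G.dist r w + G.dist w x = G.dist r x)
    (hby : G.dist r w' + G.dist w' y = G.dist r y) :
    G.dist x y + 2 * G.dist r p = G.dist r x + G.dist r y := by
  classical
  obtain ⟨Wx, hWx⟩ := cadt_below_walk htree hbx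
  obtain ⟨Wy, hWy⟩ := cadt_below_walk htree hby
  have hWxP : Wx.IsPath := cadt_desc_isPath htree Wx hWx
  have hWyP : Wy.IsPath := cadt_desc_isPath htree Wy hWy
  -- the supports of Wx and Wy are disjoint
  have cross : ∀ z, z ∈ Wx.support → z ∈ Wy.support → False := by
    intro z hzx hzy
    have hA : ((Wx.takeUntil z hzx).cons haw).IsPath := by
      refine (SimpleGraph.Walk.cons_isPath_iff haw _).mpr ⟨hWxP.takeUntil hzx, ?_⟩
      intro hmem
      have hsub := SimpleGraph.Walk.support_takeUntil_subset Wx hzx hmem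
      have := cadt_desc_support htree Wx hWx p hsub
      omega
    have hB : ((Wy.takeUntil z hzy).cons haw').IsPath := by
      refine (SimpleGraph.Walk.cons_isPath_iff haw' _).mpr ⟨hWyP.takeUntil hzy, ?_⟩
      intro hmem
      have hsub := SimpleGraph.Walk.support_takeUntil_subset Wy hzy hmem
      have := cadt_desc_support htree Wy hWy p hsub
      omega
    have hEq : ((Wx.takeUntil z hzx).cons haw) = ((Wy.takeUntil z hzy).cons haw') := by
      have := (htree.existsUnique_path p z).unique hA hB
      exact this
    have : w = w' := by
      have h1 := congrArg (fun (W : G.Walk p z) => W.getVert 1) hEq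
      simpa [SimpleGraph.Walk.getVert_cons_succ, SimpleGraph.Walk.getVert_zero] using h1
    exact hne this
  set A : G.Walk p x := Wx.cons haw with hAdef
  set B : G.Walk p y := Wy.cons haw' with hBdef
  have hAdesc : A.length + G.dist r p = G.dist r x := by
    simp only [hAdef, SimpleGraph.Walk.length_cons]; omega
  have hBdesc : B.length + G.dist r p = G.dist r y := by
    simp only [hBdef, SimpleGraph.Walk.length_cons]; omega
  have hAP : A.IsPath := cadt_desc_isPath htree A hAdesc
  have hBP : B.IsPath := cadt_desc_isPath htree B hBdesc
  have hW : (A.reverse.append B).IsPath := by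
    rw [SimpleGraph.Walk.isPath_def, SimpleGraph.Walk.support_append,
      SimpleGraph.Walk.support_reverse]
    refine List.Nodup.append (List.nodup_reverse.mpr hAP.support_nodup) ?_ ?_
    · have : B.support.tail = Wy.support := by
        simp [hBdef, SimpleGraph.Walk.support_cons]
      rw [this]; exact hWyP.support_nodup
    · intro a ha hb
      have ha' : a ∈ A.support := List.mem_reverse.mp ha
      have hb' : a ∈ Wy.support := by
        have : B.support.tail = Wy.support := by
          simp [hBdef, SimpleGraph.Walk.support_cons]
        rwa [this] at hb
      rcases List.mem_cons.mp (by simpa [hAdef, SimpleGraph.Walk.support_cons] using ha') with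
        h1 | h2
      · subst h1
        have := cadt_desc_support htree Wy hWy a hb'
        omega
      · exact cross a h2 hb'
  have hlen := cadt_path_length htree _ hW
  rw [SimpleGraph.Walk.length_append, SimpleGraph.Walk.length_reverse] at hlen
  have hAl : A.length = Wx.length + 1 := by simp [hAdef]
  have hBl : B.length = Wy.length + 1 := by simp [hBdef]
  omega

end Aux

/-- For `q ≥ 3` and even `d ≥ 2`, any coloring of the complete `(q-1)`-ary tree
of depth `d` in which vertices at distance exactly `d` get distinct colors uses
at least `log₂(d/4 + q - 1)` colors.  The tree is axiomatized: `G` is a tree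
rooted at `r`, every vertex has depth at most `d`, and every vertex at depth
less than `d` has exactly `q - 1` children. -/
theorem complete_ary_tree_exact_dist_chromatic_lb {V : Type*}
    (G : SimpleGraph V) (q d : ℕ) (r : V) (hq : 3 ≤ q)
    (htree : G.IsTree)
    (hdepth : ∀ v : V, G.dist r v ≤ d)
    (hchild : ∀ v : V, G.dist r v < d →
      {u : V | G.Adj v u ∧ G.dist r u = G.dist r v + 1}.ncard = q - 1)
    (hd : Even d) (hd2 : 2 ≤ d) :
    ∀ (C : ℕ) (f : V → Fin C),
      (∀ u v : V, u ≠ v → G.dist u v = d → f u ≠ f v) →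
      Real.logb 2 ((d : ℝ) / 4 + q - 1) ≤ C := by
  intro C f hcol
  classical
  obtain ⟨k', hk'⟩ := hd
  set k : ℕ := d / 2 with hkdef
  have hdk : d = 2 * k := by omega
  have hk1 : 1 ≤ k := by omega
  set T : ℕ := k / 2 with hTdef
  -- step: every vertex of depth < d has a child
  have hstep : ∀ v : V, G.dist r v < d → ∃ w, G.Adj v w ∧ G.dist r w = G.dist r v + 1 := by
    intro v hv
    have h1 : ({u : V | G.Adj v u ∧ G.dist r u = G.dist r v + 1}).ncard ≠ 0 := by
      rw [hchild v hv]; omega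
    obtain ⟨w, hw⟩ := Set.nonempty_of_ncard_ne_zero h1
    exact ⟨w, hw.1, hw.2⟩
  -- a vertex of depth < d has a child different from any given vertex
  have hstep2 : ∀ v : V, G.dist r v < d → ∀ a : V,
      ∃ w, (G.Adj v w ∧ G.dist r w = G.dist r v + 1) ∧ w ≠ a := by
    intro v hv a
    have h1 : 1 < ({u : V | G.Adj v u ∧ G.dist r u = G.dist r v + 1}).ncard := by
      rw [hchild v hv]; omega
    obtain ⟨w, hw, hwa⟩ := Set.exists_ne_of_one_lt_ncard h1 a
    exact ⟨w, hw, hwa⟩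
  -- existence of descendants at prescribed depth
  have hE1' : ∀ m : ℕ, ∀ v : V, G.dist r v + m ≤ d →
      ∃ x, (G.dist r v + G.dist v x = G.dist r x) ∧ G.dist r x = G.dist r v + m := by
    intro m
    induction m with
    | zero => intro v _; exact ⟨v, by simp [SimpleGraph.dist_self], by omega⟩
    | succ m ih =>
      intro v hvm
      obtain ⟨w, haw, hdw⟩ := hstep v (by omega)
      obtain ⟨x, hbx, hdx⟩ := ih w (by omega)
      exact ⟨x, cadt_below_trans htree (cadt_below_child htree haw hdw) hbx, by omega⟩
  have hE1 : ∀ (n : ℕ) (v : V), G.dist r v ≤ n → n ≤ d →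
      ∃ x, (G.dist r v + G.dist v x = G.dist r x) ∧ G.dist r x = n := by
    intro n v h1 h2
    obtain ⟨x, hb, hdx⟩ := hE1' (n - G.dist r v) v (by omega)
    exact ⟨x, hb, by omega⟩
  -- construct the root chain c 0 = r, ..., c k
  have hchain : ∀ m : ℕ, m ≤ k → ∃ c : ℕ → V, c 0 = r ∧ (∀ i ≤ m, G.dist r (c i) = i) ∧
      (∀ i < m, G.Adj (c i) (c (i + 1))) := by
    intro m
    induction m with
    | zero =>
      intro _
      exact ⟨fun _ => r, rfl, by intro i hi; interval_cases i; simp [SimpleGraph.dist_self],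
        by omega⟩
    | succ m ih =>
      intro hm
      obtain ⟨c, hc0, hcd, hcadj⟩ := ih (by omega)
      obtain ⟨w, haw, hdw⟩ := hstep (c m) (by rw [hcd m le_rfl]; omega)
      refine ⟨fun i => if i ≤ m then c i else w, by simp [hc0], ?_, ?_⟩
      · intro i hi
        by_cases h : i ≤ m
        · simp [h, hcd i h]
        · have : i = m + 1 := by omega
          subst this
          simp only [if_neg h]
          rw [hdw, hcd m le_rfl]
      · intro i hi
        by_cases h : i < m
        · have h1 : i ≤ m := by omega
          have h2 : i + 1 ≤ m := by omega
          simp only [if_pos h1, if_pos h2]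
          exact hcadj i h
        · have him : i = m := by omega
          have h2 : ¬ (m + 1 ≤ m) := by omega
          simpa [him, h2] using haw
  obtain ⟨c, hc0, hcd, hcadj⟩ := hchain k le_rfl
  have hkd : k < d := by omega
  -- chain vertices are below each other
  have hcb : ∀ i j : ℕ, i ≤ j → j ≤ k → G.dist r (c i) + G.dist (c i) (c j) = G.dist r (c j) := by
    intro i j hij
    induction j, hij using Nat.le_induction with
    | base => intro _; simp [SimpleGraph.dist_self]
    | succ j hij ih =>
      intro hjk
      exact cadt_below_trans htree (ih (by omega))
        (cadt_below_child htree (hcadj j (by omega)) (by rw [hcd (j+1) (by omega), hcd j (by omega)]))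
  have h2T : 2 * T ≤ k := by omega
  set p : V := c (2 * T) with hpdef
  have hdp : G.dist r p = 2 * T := hcd (2 * T) h2T
  -- color sets
  set S : ℕ → Finset (Fin C) := fun t => Finset.univ.filter
    (fun col => ∃ x, (G.dist r (c (2 * t)) + G.dist (c (2 * t)) x = G.dist r x) ∧
      G.dist r x = 2 * t + k ∧ f x = col) with hSdef
  set BW : V → Finset (Fin C) := fun w => Finset.univ.filter
    (fun col => ∃ x, (G.dist r w + G.dist w x = G.dist r x) ∧
      G.dist r x = 2 * T + k ∧ f x = col) with hBWdef
  have hSmem : ∀ t col, col ∈ S t ↔ ∃ x, (G.dist r (c (2 * t)) + G.dist (c (2 * t)) x = G.dist r x) ∧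
      G.dist r x = 2 * t + k ∧ f x = col := by
    intro t col; simp [hSdef]
  have hBWmem : ∀ w col, col ∈ BW w ↔ ∃ x, (G.dist r w + G.dist w x = G.dist r x) ∧
      G.dist r x = 2 * T + k ∧ f x = col := by
    intro w col; simp [hBWdef]
  -- generic conflict via a chain vertex
  have key : ∀ (j : ℕ) (x y w₀ : V), j < k →
      G.Adj (c j) w₀ → G.dist r w₀ = j + 1 → w₀ ≠ c (j + 1) →
      (G.dist r w₀ + G.dist w₀ x = G.dist r x) →
      (G.dist r (c (j + 1)) + G.dist (c (j + 1)) y = G.dist r y) →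
      G.dist r x + G.dist r y = 2 * k + 2 * j → f x ≠ f y := by
    intro j x y w₀ hjk haw hdw hne hbx hby hsum
    have hsplit := cadt_split htree hne haw (hcadj j hjk)
      (by rw [hdw, hcd j (by omega)]) (by rw [hcd (j+1) (by omega), hcd j (by omega)]) hbx hby
    rw [hcd j (by omega)] at hsplit
    have hdist : G.dist x y = d := by omega
    have hxy : x ≠ y := by
      intro h; subst h; rw [SimpleGraph.dist_self] at hdist; omega
    exact hcol x y hxy hdist
  -- claim 1 : the S-sets are pairwise distinct
  have claim1 : ∀ s t : ℕ, s < t → t ≤ T → ∃ col, col ∈ S s ∧ col ∉ S t := by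
    intro s t hst htT
    have hjk : s + t < k := by omega
    obtain ⟨w₀, ⟨haw, hdw⟩, hne⟩ := hstep2 (c (s + t)) (by rw [hcd (s+t) (by omega)]; omega)
      (c (s + t + 1))
    rw [hcd (s+t) (by omega)] at hdw
    obtain ⟨x, hbx, hdx⟩ := hE1 (2 * s + k) w₀ (by omega) (by omega)
    refine ⟨f x, ?_, ?_⟩
    · rw [hSmem]
      refine ⟨x, ?_, by omega, rfl⟩
      exact cadt_below_trans htree (hcb (2*s) (s+t) (by omega) (by omega))
        (cadt_below_trans htree (cadt_below_child htree haw (by rw [hdw, hcd (s+t) (by omega)])) hbx)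
    · rw [hSmem]
      rintro ⟨y, hby, hdy, hfy⟩
      refine key (s + t) x y w₀ hjk haw hdw hne hbx ?_ (by omega) hfy.symm
      exact cadt_below_trans htree (hcb (s+t+1) (2*t) (by omega) (by omega)) hby
  -- claim B : S t is different from each BW w
  have claimB : ∀ w, G.Adj p w → G.dist r w = 2 * T + 1 → ∀ t ≤ T,
      ∃ col, col ∈ S t ∧ col ∉ BW w := by
    intro w haw hdw t htT
    by_cases hcase : t = T
    · obtain ⟨w'', ⟨haw'', hdw''⟩, hne''⟩ := hstep2 p (by omega) w
      rw [hdp] at hdw''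
      obtain ⟨x, hbx, hdx⟩ := hE1 (2 * t + k) w'' (by omega) (by omega)
      refine ⟨f x, ?_, ?_⟩
      · rw [hSmem, hcase]
        exact ⟨x, cadt_below_trans htree
          (cadt_below_child htree haw'' (by rw [hdw'', hdp])) hbx, by omega, rfl⟩
      · rw [hBWmem]
        rintro ⟨y, hby, hdy, hfy⟩
        have hsplit := cadt_split htree hne'' haw'' haw
          (by rw [hdw'', hdp]) (by rw [hdw, hdp]) hbx hby
        rw [hdp] at hsplit
        have hdist : G.dist x y = d := by omega
        have hxy : x ≠ y := by
          intro h; subst h; rw [SimpleGraph.dist_self] at hdist; omega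
        exact hcol x y hxy hdist hfy.symm
    · have htT' : t < T := by omega
      have hk2 : 2 ≤ k := by omega
      have hjk : t + T < k := by omega
      obtain ⟨w₀, ⟨haw₀, hdw₀⟩, hne₀⟩ := hstep2 (c (t + T)) (by rw [hcd (t+T) (by omega)]; omega)
        (c (t + T + 1))
      rw [hcd (t+T) (by omega)] at hdw₀
      obtain ⟨x, hbx, hdx⟩ := hE1 (2 * t + k) w₀ (by omega) (by omega)
      refine ⟨f x, ?_, ?_⟩
      · rw [hSmem]
        refine ⟨x, ?_, by omega, rfl⟩
        exact cadt_below_trans htree (hcb (2*t) (t+T) (by omega) (by omega))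
          (cadt_below_trans htree (cadt_below_child htree haw₀
            (by rw [hdw₀, hcd (t+T) (by omega)])) hbx)
      · rw [hBWmem]
        rintro ⟨y, hby, hdy, hfy⟩
        refine key (t + T) x y w₀ hjk haw₀ hdw₀ hne₀ hbx ?_ (by omega) hfy.symm
        exact cadt_below_trans htree (hcb (t+T+1) (2*T) (by omega) (by omega))
          (cadt_below_trans htree (cadt_below_child htree haw (by rw [hdw, hdp])) hby)
  -- claim 3 : the BW sets are nonempty and pairwise disjoint
  have claim3a : ∀ w, G.Adj p w → G.dist r w = 2 * T + 1 → (BW w).Nonempty := by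
    intro w haw hdw
    obtain ⟨x, hbx, hdx⟩ := hE1 (2 * T + k) w (by omega) (by omega)
    exact ⟨f x, (hBWmem w (f x)).mpr ⟨x, hbx, hdx, rfl⟩⟩
  have claim3 : ∀ w w', w ≠ w' → G.Adj p w → G.Adj p w' →
      G.dist r w = 2 * T + 1 → G.dist r w' = 2 * T + 1 →
      ∀ col, col ∈ BW w → col ∉ BW w' := by
    intro w w' hne haw haw' hdw hdw' col hcolw hcolw'
    obtain ⟨x, hbx, hdx, hfx⟩ := (hBWmem w col).mp hcolw
    obtain ⟨y, hby, hdy, hfy⟩ := (hBWmem w' col).mp hcolw'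
    have hsplit := cadt_split htree hne haw haw'
      (by rw [hdw, hdp]) (by rw [hdw', hdp]) hbx hby
    rw [hdp] at hsplit
    have hdist : G.dist x y = d := by omega
    have hxy : x ≠ y := by
      intro h; subst h; rw [SimpleGraph.dist_self] at hdist; omega
    exact hcol x y hxy hdist (by rw [hfx, hfy])
  -- the set of children of p
  set ChS : Set V := {u : V | G.Adj p u ∧ G.dist r u = G.dist r p + 1} with hChSdef
  have hChncard : ChS.ncard = q - 1 := hchild p (by omega)
  have hChfin : ChS.Finite := by
    by_contra h
    have := Set.Infinite.ncard (s := ChS) h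
    omega
  set ChF : Finset V := hChfin.toFinset with hChFdef
  have hChFcard : ChF.card = q - 1 := by
    rw [← hChncard, Set.ncard_eq_toFinset_card _ hChfin]
  have hChFmem : ∀ w, w ∈ ChF ↔ (G.Adj p w ∧ G.dist r w = 2 * T + 1) := by
    intro w
    rw [hChFdef, Set.Finite.mem_toFinset, hChSdef]
    simp [hdp]
  -- the family of distinct color sets
  set F : Finset (Finset (Fin C)) := ((Finset.range (T + 1)).image S) ∪ (ChF.image BW)
    with hFdef
  have hcard1 : ((Finset.range (T + 1)).image S).card = T + 1 := by
    rw [Finset.card_image_of_injOn, Finset.card_range]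
    intro a ha b hb hab
    simp only [Finset.coe_range, Set.mem_Iio] at ha hb
    by_contra hne
    rcases lt_or_gt_of_ne hne with h | h
    · obtain ⟨col, hc1, hc2⟩ := claim1 a b h (by omega)
      rw [hab] at hc1; exact hc2 hc1
    · obtain ⟨col, hc1, hc2⟩ := claim1 b a h (by omega)
      rw [← hab] at hc1; exact hc2 hc1
  have hcard2 : (ChF.image BW).card = q - 1 := by
    rw [Finset.card_image_of_injOn, hChFcard]
    intro a ha b hb hab
    simp only [Finset.mem_coe] at ha hb
    obtain ⟨ha1, ha2⟩ := (hChFmem a).mp ha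
    obtain ⟨hb1, hb2⟩ := (hChFmem b).mp hb
    by_contra hne
    obtain ⟨col, hcola⟩ := claim3a a ha1 ha2
    exact claim3 a b hne ha1 hb1 ha2 hb2 col hcola (hab ▸ hcola)
  have hdisj : Disjoint ((Finset.range (T + 1)).image S) (ChF.image BW) := by
    rw [Finset.disjoint_left]
    intro X hX1 hX2
    obtain ⟨t, ht, hXt⟩ := Finset.mem_image.mp hX1
    obtain ⟨w, hw, hXw⟩ := Finset.mem_image.mp hX2
    obtain ⟨hw1, hw2⟩ := (hChFmem w).mp hw
    obtain ⟨col, hc1, hc2⟩ := claimB w hw1 hw2 t (by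
      have := Finset.mem_range.mp ht; omega)
    rw [hXt] at hc1
    rw [hXw] at hc2
    exact hc2 hc1
  have hFcard : F.card = T + 1 + (q - 1) := by
    rw [hFdef, Finset.card_union_of_disjoint hdisj, hcard1, hcard2]
  have hFle : F.card ≤ 2 ^ C := by
    calc F.card ≤ Fintype.card (Finset (Fin C)) := Finset.card_le_univ F
    _ = 2 ^ C := by rw [Fintype.card_finset, Fintype.card_fin]
  have hTq : T + q ≤ 2 ^ C := by omega
  -- final arithmetic
  have hq' : (3 : ℝ) ≤ (q : ℝ) := by exact_mod_cast hq
  have hpos : (0 : ℝ) < (d : ℝ) / 4 + q - 1 := by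
    have : (0 : ℝ) ≤ (d : ℝ) := by positivity
    linarith
  have hdle : (d : ℝ) ≤ 4 * T + 2 := by
    have : d ≤ 4 * T + 2 := by omega
    exact_mod_cast this
  have harg : (d : ℝ) / 4 + q - 1 ≤ (2 : ℝ) ^ C := by
    have h1 : ((T : ℝ) + q) ≤ (2 : ℝ) ^ C := by
      have := hTq
      calc ((T : ℝ) + q) = ((T + q : ℕ) : ℝ) := by push_cast; ring
      _ ≤ ((2 ^ C : ℕ) : ℝ) := by exact_mod_cast this
      _ = (2 : ℝ) ^ C := by push_cast; ring
    linarith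
  calc Real.logb 2 ((d : ℝ) / 4 + q - 1) ≤ Real.logb 2 ((2 : ℝ) ^ C) :=
        Real.logb_le_logb_of_le (by norm_num) hpos harg
  _ = C := by
    rw [Real.logb_pow, Real.logb_self_eq_one (by norm_num)]
    ring
end

section
/- For any even integer d ≥ 2, χ(P_3^d, d) ≥ log_2(d + 8) - 2, where P_3^d is the caterpillar-like tree obtained from a path v_0, v_1, …, v_d by attaching to each v_i (1 ≤ i ≤ d) a pendant path with i edges ending at v_i. -/
/-!
Write `d = 2m` and call the pendant path at `v_i` the leg `i`; the vertex `(i, j)` is at depth `j`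
on leg `i`. Two vertices on different legs `i < i'` are at distance `j + j' + (i' - i)`. Group the
vertices of depth at most `m` by their antidiagonal `s = i + j`. A vertex of depth `m - r` on
antidiagonal `s` is then at distance exactly `2m` from every vertex of depth at most `m` on
antidiagonal `s + 2r`, so its color is missing from the colors of that antidiagonal. Hence the
color sets of the antidiagonals `2m - 1, 2m + 1, …, 3m` are pairwise distinct nonempty subsets of
the `C` colors; there are `⌊(m + 3) / 2⌋` of them, so `⌊(m + 3) / 2⌋ < 2 ^ C`,
which gives `d + 8 ≤ 2 ^ (C + 2)`.
-/

/-- The tree `P₃ᵈ`: a path `v₀, …, v_d` (the vertices `(i, 0)` for `i ≤ d`),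
together with, for each `1 ≤ i ≤ d`, a pendant path on `i` edges ending at
`v_i` (the vertices `(i, j)` for `1 ≤ j ≤ i`). -/
def Pgraph (d : ℕ) : SimpleGraph {p : ℕ × ℕ // p.1 ≤ d ∧ p.2 ≤ p.1} where
  Adj a b :=
    (a.1.1 = b.1.1 ∧ (a.1.2 = b.1.2 + 1 ∨ b.1.2 = a.1.2 + 1)) ∨
    (a.1.2 = 0 ∧ b.1.2 = 0 ∧ (a.1.1 = b.1.1 + 1 ∨ b.1.1 = a.1.1 + 1))
  symm := ⟨by
    rintro a b (⟨h1, h2⟩ | ⟨h1, h2, h3⟩)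
    · exact Or.inl ⟨h1.symm, h2.symm⟩
    · exact Or.inr ⟨h2, h1, h3.symm⟩⟩
  loopless := ⟨by
    rintro a (⟨-, h⟩ | ⟨-, -, h⟩) <;> omega⟩

def IsExactDistColoring {V α : Type*} (G : SimpleGraph V) (d : ℕ) (f : V → α) : Prop :=
  ∀ u v, u ≠ v → G.dist u v = d → f u ≠ f v

theorem SimpleGraph.Reachable.le_add_dist {V : Type*} {G : SimpleGraph V} (φ : V → ℕ)
    (hφ : ∀ a b, G.Adj a b → φ b ≤ φ a + 1) {a b : V} (h : G.Reachable a b) :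
    φ b ≤ φ a + G.dist a b := by
  have le_add_length : ∀ {a b : V} (w : G.Walk a b), φ b ≤ φ a + w.length := by
    intro a b w
    induction w with
    | nil => simp
    | cons hadj _ ih =>
      have := hφ _ _ hadj
      rw [SimpleGraph.Walk.length_cons]
      omega
  obtain ⟨w, hw⟩ := h.exists_walk_length_eq_dist
  exact hw ▸ le_add_length w

abbrev PgraphVertex (d : ℕ) := {p : ℕ × ℕ // p.1 ≤ d ∧ p.2 ≤ p.1}

namespace Pgraph

variable {d : ℕ}

lemma exists_walk_down_leg (i : ℕ) (hi : i ≤ d) :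
    ∀ j (hj : j ≤ i), ∃ w : (Pgraph d).Walk ⟨(i, j), hi, hj⟩ ⟨(i, 0), hi, i.zero_le⟩,
      w.length = j
  | 0, _ => ⟨.nil, rfl⟩
  | j + 1, hj =>
    have hadj : (Pgraph d).Adj ⟨(i, j + 1), hi, hj⟩ ⟨(i, j), hi, by omega⟩ :=
      .inl ⟨rfl, .inl rfl⟩
    let ⟨w, hw⟩ := exists_walk_down_leg i hi j (by omega)
    ⟨.cons hadj w, by simp [hw]⟩

lemma exists_walk_along_spine (i : ℕ) :
    ∀ k (hk : i + k ≤ d), ∃ w : (Pgraph d).Walk ⟨(i, 0), by omega, i.zero_le⟩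
      ⟨(i + k, 0), hk, Nat.zero_le _⟩, w.length = k
  | 0, _ => ⟨.nil, rfl⟩
  | k + 1, hk =>
    have hadj : (Pgraph d).Adj ⟨(i + k, 0), by omega, Nat.zero_le _⟩
        ⟨(i + (k + 1), 0), hk, Nat.zero_le _⟩ := .inr ⟨rfl, rfl, .inr rfl⟩
    let ⟨w, hw⟩ := exists_walk_along_spine i k (by omega)
    ⟨w.concat hadj, by simp [hw]⟩

theorem dist_eq_of_fst_lt {u v : PgraphVertex d} (h : u.1.1 < v.1.1) :
    (Pgraph d).dist u v = u.1.2 + v.1.2 + (v.1.1 - u.1.1) := by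
  obtain ⟨⟨i, j⟩, hi, hj⟩ := u
  obtain ⟨⟨i', j'⟩, hi', hj'⟩ := v
  dsimp only at h hi hj hi' hj' ⊢
  obtain ⟨k, rfl⟩ : ∃ k, i' = i + k := ⟨i' - i, by omega⟩
  obtain ⟨down, hdown⟩ := exists_walk_down_leg i hi j hj
  obtain ⟨spine, hspine⟩ := exists_walk_along_spine i k hi'
  obtain ⟨up, hup⟩ := exists_walk_down_leg (i + k) hi' j' hj'
  let w := (down.append spine).append up.reverse
  have hw : w.length = j + j' + k := by
    simp only [w, SimpleGraph.Walk.length_append, SimpleGraph.Walk.length_reverse]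
    omega
  have hle := SimpleGraph.dist_le w
  let φ : PgraphVertex d → ℕ := fun x =>
    if x.1.1 = i then j - x.1.2 else j + x.1.2 + (x.1.1 - i)
  have hφ : ∀ a b, (Pgraph d).Adj a b → φ b ≤ φ a + 1 := by
    rintro ⟨⟨x, y⟩, _⟩ ⟨⟨x', y'⟩, _⟩ hadj
    simp only [Pgraph, φ] at hadj ⊢
    split_ifs <;> omega
  have hge := w.reachable.le_add_dist φ hφ
  simp only [φ, if_pos, if_neg (show i + k ≠ i by omega)] at hge
  omega

end Pgraph

lemma card_lt_two_pow_of_injective {ι α : Type*} [Fintype ι] [Fintype α] {F : ι → Set α}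
    (hF : Function.Injective F) (hne : ∀ i, (F i).Nonempty) :
    Fintype.card ι < 2 ^ Fintype.card α := by
  rw [← Fintype.card_set]
  refine Fintype.card_lt_of_injective_not_surjective F hF fun hsurj => ?_
  obtain ⟨i, hi⟩ := hsurj ∅
  exact (hne i).ne_empty hi

section Antidiagonal

variable {m C : ℕ} (f : PgraphVertex (m + m) → Fin C)

def antidiagColors (s : ℕ) : Set (Fin C) :=
  f '' {v | v.1.2 ≤ m ∧ v.1.1 + v.1.2 = s}

lemma antidiagColors_nonempty (hm : 1 ≤ m) {s : ℕ} (hs : s ≤ 3 * m) :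
    (antidiagColors f s).Nonempty :=
  ⟨_, ⟨(s - min m (s / 2), min m (s / 2)), by omega, by omega⟩,
    ⟨by dsimp only; omega, by dsimp only; omega⟩, rfl⟩

variable {f}

lemma antidiagColors_ne (hf : IsExactDistColoring (Pgraph (m + m)) (m + m) f)
    {s r : ℕ} (hr : 1 ≤ r) (hrm : r ≤ m) (hs : m + m ≤ s + r + r) (hs' : s + r ≤ 3 * m) :
    antidiagColors f s ≠ antidiagColors f (s + 2 * r) := by
  let u : PgraphVertex (m + m) := ⟨(s + r - m, m - r), by omega, by omega⟩
  have hu : f u ∈ antidiagColors f s :=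
    ⟨u, ⟨by dsimp only [u]; omega, by dsimp only [u]; omega⟩, rfl⟩
  intro heq
  obtain ⟨v, ⟨hvm, hvs⟩, hfv⟩ := heq ▸ hu
  have hlt : u.1.1 < v.1.1 := by dsimp only [u]; omega
  refine hf u v (fun h => hlt.ne (h ▸ rfl)) ?_ hfv.symm
  rw [Pgraph.dist_eq_of_fst_lt hlt]
  dsimp only [u]
  omega

lemma antidiagColors_injective
    (hf : IsExactDistColoring (Pgraph (m + m)) (m + m) f) :
    Function.Injective fun k : Fin ((m + 3) / 2) => antidiagColors f (2 * m - 1 + 2 * k) := by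
  refine Function.Injective.of_lt_imp_ne fun k l hkl => ?_
  have hkl' : (k : ℕ) < l := hkl
  have hl := l.isLt
  have := antidiagColors_ne hf (s := 2 * m - 1 + 2 * k) (r := l - k) (by omega) (by omega)
    (by omega) (by omega)
  rwa [show 2 * m - 1 + 2 * k + 2 * (l - k) = 2 * m - 1 + 2 * l by omega] at this

end Antidiagonal

lemma logb_two_le_of_le_two_pow {x : ℝ} {n : ℕ} (hx : 0 < x) (h : x ≤ 2 ^ n) :
    Real.logb 2 x ≤ n := by
  rw [Real.logb_le_iff_le_rpow one_lt_two hx]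
  exact_mod_cast h

/-- For any even integer `d ≥ 2`, any coloring of `P₃ᵈ` in which vertices at
distance exactly `d` receive distinct colors uses at least `log₂(d + 8) - 2`
colors, i.e. `χ(P₃ᵈ, d) ≥ log₂(d + 8) - 2`. -/
theorem Pgraph_exact_dist_chromatic_lb (d : ℕ) (hd : Even d) (hd2 : 2 ≤ d) :
    ∀ (C : ℕ) (f : {p : ℕ × ℕ // p.1 ≤ d ∧ p.2 ≤ p.1} → Fin C),
      (∀ u v, u ≠ v → (Pgraph d).dist u v = d → f u ≠ f v) →
      Real.logb 2 ((d : ℝ) + 8) - 2 ≤ C := by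
  intro C f hf
  obtain ⟨m, rfl⟩ := hd
  have hcard : (m + 3) / 2 < 2 ^ C := by
    simpa using card_lt_two_pow_of_injective (antidiagColors_injective hf)
      fun k => antidiagColors_nonempty f (by omega) (by omega)
  have hpow : ((m + m : ℕ) : ℝ) + 8 ≤ 2 ^ (C + 2) := by
    rw [pow_succ, pow_succ]
    exact_mod_cast (by omega : m + m + 8 ≤ 2 ^ C * 2 * 2)
  have := logb_two_le_of_le_two_pow (by positivity) hpow
  push_cast at this ⊢
  linarith
end

section
/- The shift graph on pairs from {1, …, n} has chromatic number at least log_2(n); i.e., any proper coloring of the graph whose vertices are pairs (i,j) with 1 ≤ i < j ≤ n, with (i,j) adjacent to (j,k), uses at least log_2(n) colors. -/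
/-- The shift graph `S_n`: vertices are pairs `(i, j)` with `1 ≤ i < j ≤ n`,
and `(i, j)` is adjacent to `(j, k)`. -/
def shiftGraph (n : ℕ) : SimpleGraph {p : ℕ × ℕ // 1 ≤ p.1 ∧ p.1 < p.2 ∧ p.2 ≤ n} where
  Adj a b := a.1.2 = b.1.1 ∨ b.1.2 = a.1.1
  symm := by
    constructor
    rintro a b (h | h)
    · exact Or.inr h
    · exact Or.inl h
  loopless := by
    constructor
    rintro ⟨a, ha⟩ (h | h) <;> simp_all <;> omega

/-!
Give each index `i` the set of colours of the pairs `(i, j)`. For `i < k` the colour of `(i, k)`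
lies in the set of `i` but not in that of `k`, since every `(k, m)` is adjacent to `(i, k)`.
So the `n` indices receive distinct subsets of the colours, and `n ≤ 2 ^ C`.
-/

namespace shiftGraph

variable {n : ℕ} {α : Type*}

def outColors (c : (shiftGraph n).Coloring α) (i : ℕ) : Set α :=
  c '' {v | v.1.1 = i}

theorem outColors_ne_of_lt (c : (shiftGraph n).Coloring α) {i k : ℕ}
    (hi : 1 ≤ i) (hik : i < k) (hk : k ≤ n) : outColors c i ≠ outColors c k := by
  intro heq
  let v : {p : ℕ × ℕ // 1 ≤ p.1 ∧ p.1 < p.2 ∧ p.2 ≤ n} := ⟨(i, k), hi, hik, hk⟩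
  have hv : c v ∈ outColors c k := heq ▸ Set.mem_image_of_mem c rfl
  obtain ⟨w, hw, hcw⟩ := hv
  exact c.valid (Or.inl hw.symm : (shiftGraph n).Adj v w) hcw.symm

theorem outColors_injOn (c : (shiftGraph n).Coloring α) :
    Set.InjOn (outColors c) (Finset.Icc 1 n : Set ℕ) := by
  intro i hi k hk heq
  simp only [Finset.coe_Icc, Set.mem_Icc] at hi hk
  rcases lt_trichotomy i k with hlt | rfl | hgt
  · exact absurd heq (outColors_ne_of_lt c hi.1 hlt hk.2)
  · rfl
  · exact absurd heq.symm (outColors_ne_of_lt c hk.1 hgt hi.2)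

theorem le_two_pow_of_colorable {k : ℕ} (h : (shiftGraph n).Colorable k) : n ≤ 2 ^ k := by
  obtain ⟨c⟩ := h
  have := Finset.card_le_card_of_injOn (outColors c) (t := Finset.univ)
    (fun _ _ ↦ Finset.mem_coe.2 (Finset.mem_univ _)) (outColors_injOn c)
  simpa [Fintype.card_set] using this

end shiftGraph

/-- Any proper coloring of the shift graph on pairs from `{1, …, n}` uses at
least `log₂ n` colors. -/
theorem shiftGraph_chromatic_lb (n : ℕ) :
    ∀ (C : ℕ) (f : {p : ℕ × ℕ // 1 ≤ p.1 ∧ p.1 < p.2 ∧ p.2 ≤ n} → Fin C),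
      (∀ a b, (shiftGraph n).Adj a b → f a ≠ f b) →
      Real.logb 2 (n : ℝ) ≤ C := by
  intro C f hf
  have hn : n ≤ 2 ^ C := shiftGraph.le_two_pow_of_colorable ⟨.mk f (hf _ _)⟩
  rcases Nat.eq_zero_or_pos n with rfl | hpos
  · simp
  · rw [Real.logb_le_iff_le_rpow one_lt_two (by exact_mod_cast hpos), Real.rpow_natCast]
    exact_mod_cast hn
end

section
/- For any integers q ≥ 3, even d ≥ 2, and real c > 1, the infinite q-regular tree contains q·(q-1)^{⌊cd/2⌋ - ⌊d/2⌋} vertices that are pairwise at distance at least d and at most cd; hence χ(T_q, [d, cd]) ≥ q(q-1)^{⌊cd/2⌋ - ⌊d/2⌋}. -/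
/-!
Root the tree at a vertex `r` and let `m = ⌊cd/2⌋`, `e = d/2`, `k = m - e`. The sphere of radius
`k + 1` about `r` has `q(q-1)^k` vertices, pairwise at distance at least `2`. Push each of them
`e - 1` steps away from the root, one child at a time: in a tree the path between the children
of two distinct vertices at the same depth runs through those vertices, so each step adds exactly
`2` to every pairwise distance, which ends up at least `2e = d`. The resulting vertices lie at
depth `m`, hence within `2m ≤ cd` of each other through the root.
-/

theorem Set.Finite.exists_finset_subset_card_eq {α : Type*} {s : Set α} (hs : s.Finite) {n : ℕ}
    (hn : n ≤ s.ncard) : ∃ t : Finset α, ↑t ⊆ s ∧ t.card = n := by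
  obtain ⟨t, hts, rfl⟩ := Finset.exists_subset_card_eq (s := hs.toFinset) (n := n)
    (by rwa [← Set.ncard_eq_toFinset_card s hs])
  exact ⟨t, fun x hx => hs.mem_toFinset.mp (hts hx), rfl⟩

namespace SimpleGraph

variable {V : Type*} {G : SimpleGraph V}

def childSet (G : SimpleGraph V) (r u : V) : Set V :=
  {w | G.Adj u w ∧ G.dist r w = G.dist r u + 1}

lemma childSet_self (r : V) : G.childSet r r = G.neighborSet r := by
  ext w
  simp [childSet, dist_eq_one_iff_adj]

lemma dist_iterate_of_mem_childSet {r : V} {ch : V → V} (hch : ∀ u, ch u ∈ G.childSet r u)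
    (u : V) (j : ℕ) : G.dist r (ch^[j] u) = G.dist r u + j := by
  induction j with
  | zero => rfl
  | succ j ih => rw [Function.iterate_succ_apply', (hch _).2, ih, add_assoc]

namespace IsTree

lemma mem_childSet_or_mem_childSet (hG : G.IsTree) (r : V) {x z : V} (h : G.Adj x z) :
    z ∈ G.childSet r x ∨ x ∈ G.childSet r z :=
  (hG.dist_eq_dist_add_one_of_adj r h).symm.imp (⟨h, ·⟩) (⟨h.symm, ·⟩)

lemma eq_of_mem_childSet (hG : G.IsTree) {r u v w : V} (hu : w ∈ G.childSet r u)
    (hv : w ∈ G.childSet r v) : u = v := by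
  obtain ⟨p, hp⟩ := hG.connected.exists_walk_length_eq_dist r u
  obtain ⟨p', hp'⟩ := hG.connected.exists_walk_length_eq_dist r v
  -- both extensions are geodesics from `r` to `w`, hence the unique path
  have h := (hG.isAcyclic.subsingleton_path r w).elim
    ⟨_, (p.concat hu.1).isPath_of_length_eq_dist (by simp [hp, hu.2])⟩
    ⟨_, (p'.concat hv.1).isPath_of_length_eq_dist (by simp [hp', hv.2])⟩
  exact (Walk.concat_inj (congrArg Subtype.val h)).1

lemma dist_eq_add_length_of_isPath_cons (hG : G.IsTree) {r a x b : V}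
    (hx : x ∈ G.childSet r a) (p : G.Walk x b) (hp : (Walk.cons hx.1 p).IsPath) :
    G.dist r b = G.dist r x + p.length := by
  induction p generalizing a with
  | nil => rfl
  | @cons x y b h p ih =>
    have hay : a ≠ y := by
      rintro rfl
      exact ((Walk.cons_isPath_iff _ _).mp hp).2 (by simp)
    have hy : y ∈ G.childSet r x :=
      (hG.mem_childSet_or_mem_childSet r h).resolve_right
        fun hxy => hay (hG.eq_of_mem_childSet hx hxy)
    rw [ih hy hp.of_cons, Walk.length_cons, hy.2]
    ring

lemma dist_eq_dist_add_one_of_mem_childSet (hG : G.IsTree) {r x x' y : V}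
    (hx' : x' ∈ G.childSet r x) (hy : y ≠ x') (hdy : G.dist r y ≤ G.dist r x') :
    G.dist x' y = G.dist x y + 1 := by
  obtain ⟨p, hp, hpl⟩ := hG.connected.exists_path_of_dist x' y
  cases p with
  | nil => exact absurd rfl hy
  | @cons _ z _ h q =>
    by_cases hzx : z = x
    · subst hzx
      have hq : G.dist z y ≤ q.length := dist_le q
      have htri : G.dist x' y ≤ G.dist x' z + G.dist z y := hG.connected.dist_triangle
      rw [Walk.length_cons] at hpl
      rw [dist_eq_one_iff_adj.mpr h] at htri
      omega
    · -- otherwise the geodesic from `x'` keeps moving away from the root, past the depth of `y`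
      have hz : z ∈ G.childSet r x' :=
        (hG.mem_childSet_or_mem_childSet r h).resolve_right
          fun hxz => hzx (hG.eq_of_mem_childSet hxz hx')
      have := hG.dist_eq_add_length_of_isPath_cons hz q hp
      have := hz.2
      omega

lemma dist_eq_dist_add_two (hG : G.IsTree) {r u v u' v' : V} (huv : u ≠ v)
    (hd : G.dist r u = G.dist r v) (hu : u' ∈ G.childSet r u) (hv : v' ∈ G.childSet r v) :
    G.dist u' v' = G.dist u v + 2 := by
  have hvu' : v' ≠ u' := fun h => huv (hG.eq_of_mem_childSet hu (h ▸ hv))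
  have huv' : u ≠ v' := fun h => by have := hv.2; rw [← h, ← hd] at this; omega
  calc G.dist u' v' = G.dist v' u + 1 := by
        rw [hG.dist_eq_dist_add_one_of_mem_childSet hu hvu' (by rw [hu.2, hv.2, hd]), dist_comm]
    _ = G.dist u v + 2 := by
        rw [hG.dist_eq_dist_add_one_of_mem_childSet hv huv' (by rw [hv.2, hd]; omega), dist_comm]

lemma dist_iterate_eq (hG : G.IsTree) {r : V} {ch : V → V} (hch : ∀ u, ch u ∈ G.childSet r u)
    {u v : V} (huv : u ≠ v) (hd : G.dist r u = G.dist r v) (j : ℕ) :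
    G.dist (ch^[j] u) (ch^[j] v) = G.dist u v + 2 * j := by
  induction j with
  | zero => rfl
  | succ j ih =>
    have hne : ch^[j] u ≠ ch^[j] v := fun h => by
      rw [h, dist_self, eq_comm] at ih
      exact huv (hG.connected.dist_eq_zero_iff.mp (by omega))
    rw [Function.iterate_succ_apply', Function.iterate_succ_apply',
      hG.dist_eq_dist_add_two hne (by simp only [dist_iterate_of_mem_childSet hch, hd])
        (hch _) (hch _), ih]
    ring

lemma two_le_dist (hG : G.IsTree) {r u v : V} (huv : u ≠ v) (hd : G.dist r u = G.dist r v) :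
    2 ≤ G.dist u v := by
  have h0 : G.dist u v ≠ 0 := fun h => huv (hG.connected.dist_eq_zero_iff.mp h)
  have h1 : G.dist u v ≠ 1 := fun h => hG.dist_ne_of_adj r (dist_eq_one_iff_adj.mp h) hd
  omega

variable {q : ℕ}

lemma le_ncard_childSet_add_one (hG : G.IsTree) (r : V) (hreg : ∀ v, (G.neighborSet v).ncard = q)
    (hq : q ≠ 0) (u : V) : q ≤ (G.childSet r u).ncard + 1 := by
  have hfin : (G.neighborSet u).Finite := Set.finite_of_ncard_ne_zero (by rwa [hreg u])
  have hC : G.childSet r u ⊆ G.neighborSet u := fun _ h => h.1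
  have hP : {w | u ∈ G.childSet r w} ⊆ G.neighborSet u := fun _ h => h.1.symm
  have hparent : {w | u ∈ G.childSet r w}.ncard ≤ 1 :=
    (Set.ncard_le_one (hfin.subset hP)).mpr fun _ h _ h' => hG.eq_of_mem_childSet h h'
  calc q = (G.neighborSet u).ncard := (hreg u).symm
    _ ≤ (G.childSet r u ∪ {w | u ∈ G.childSet r w}).ncard :=
        Set.ncard_le_ncard (fun _ h => hG.mem_childSet_or_mem_childSet r h)
          ((hfin.subset hC).union (hfin.subset hP))
    _ ≤ _ := (Set.ncard_union_le _ _).trans (by omega)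

lemma exists_finset_card_eq_forall_dist_eq (hG : G.IsTree) (r : V)
    (hreg : ∀ v, (G.neighborSet v).ncard = q) (hq : q ≠ 0) (n : ℕ) :
    ∃ S : Finset V, S.card = q * (q - 1) ^ n ∧ ∀ v ∈ S, G.dist r v = n + 1 := by
  classical
  have hfin (u : V) : (G.childSet r u).Finite :=
    (Set.finite_of_ncard_ne_zero (s := G.neighborSet u) (by rwa [hreg u])).subset fun _ h => h.1
  induction n with
  | zero =>
    obtain ⟨S, hS, hcard⟩ :=
      (hfin r).exists_finset_subset_card_eq (n := q) (by rw [childSet_self, hreg])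
    refine ⟨S, by simpa using hcard, fun v hv => ?_⟩
    simpa using (hS hv).2
  | succ n ih =>
    obtain ⟨S, hcard, hdepth⟩ := ih
    choose T hTsub hTcard using fun u => (hfin u).exists_finset_subset_card_eq (n := q - 1)
      (by have := hG.le_ncard_childSet_add_one r hreg hq u; omega)
    have hdisj : (S : Set V).PairwiseDisjoint T := fun x _ y _ hxy => Finset.disjoint_left.mpr
      fun _ hx hy => hxy (hG.eq_of_mem_childSet (hTsub x hx) (hTsub y hy))
    refine ⟨S.biUnion T, ?_, fun w hw => ?_⟩
    · rw [Finset.card_biUnion hdisj, Finset.sum_const_nat fun u _ => hTcard u, hcard, pow_succ]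
      ring
    · obtain ⟨u, hu, hw⟩ := Finset.mem_biUnion.mp hw
      rw [(hTsub u hw).2, hdepth u hu]

lemma exists_finset_card_eq_dist_mem_Icc (hG : G.IsTree)
    (hreg : ∀ v, (G.neighborSet v).ncard = q) (hq : 2 ≤ q) (k j : ℕ) :
    ∃ S : Finset V, S.card = q * (q - 1) ^ k ∧ ∀ u ∈ S, ∀ v ∈ S, u ≠ v →
      2 * (j + 1) ≤ G.dist u v ∧ G.dist u v ≤ 2 * (k + j + 1) := by
  classical
  obtain ⟨r⟩ := hG.connected.nonempty
  have hchild (u : V) : (G.childSet r u).Nonempty := Set.nonempty_of_ncard_ne_zero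
    (by have := hG.le_ncard_childSet_add_one r hreg (by omega) u; omega)
  choose ch hch using hchild
  obtain ⟨S, hcard, hdepth⟩ := hG.exists_finset_card_eq_forall_dist_eq r hreg (by omega) k
  have hdist : ∀ u ∈ S, ∀ v ∈ S, u ≠ v →
      2 * (j + 1) ≤ G.dist (ch^[j] u) (ch^[j] v) := fun u hu v hv huv => by
    have hd : G.dist r u = G.dist r v := by rw [hdepth u hu, hdepth v hv]
    rw [hG.dist_iterate_eq hch huv hd]
    have := hG.two_le_dist huv hd
    omega
  have hinj : Set.InjOn ch^[j] S := fun u hu v hv h => by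
    by_contra huv
    have := hdist u hu v hv huv
    rw [h, dist_self] at this
    omega
  refine ⟨S.image ch^[j], by rw [Finset.card_image_of_injOn hinj, hcard], ?_⟩
  simp only [Finset.mem_image]
  rintro _ ⟨u, hu, rfl⟩ _ ⟨v, hv, rfl⟩ hne
  refine ⟨hdist u hu v hv fun h => hne (h ▸ rfl), ?_⟩
  calc G.dist (ch^[j] u) (ch^[j] v) ≤ G.dist (ch^[j] u) r + G.dist r (ch^[j] v) :=
        hG.connected.dist_triangle
    _ = 2 * (k + j + 1) := by
        rw [dist_comm, dist_iterate_of_mem_childSet hch, dist_iterate_of_mem_childSet hch,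
          hdepth u hu, hdepth v hv]
        ring

end IsTree

end SimpleGraph

/-- For `q ≥ 3`, even `d ≥ 2`, and real `c > 1`, the infinite `q`-regular tree
contains `q(q-1)^(⌊cd/2⌋ - ⌊d/2⌋)` vertices pairwise at distance at least `d`
and at most `cd`; hence any coloring in which such pairs get distinct colors
uses at least `q(q-1)^(⌊cd/2⌋ - ⌊d/2⌋)` colors. -/
theorem regular_tree_interval_clique_and_chromatic_lb {V : Type*}
    (G : SimpleGraph V) (q d : ℕ) (c : ℝ) (hq : 3 ≤ q) (hc : 1 < c)
    (hd : Even d) (hd2 : 2 ≤ d)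
    (htree : G.IsTree) (hreg : ∀ v : V, (G.neighborSet v).ncard = q) :
    (∃ S : Finset V, S.card = q * (q - 1) ^ (⌊c * d / 2⌋₊ - d / 2) ∧
      ∀ u ∈ S, ∀ v ∈ S, u ≠ v →
        (d : ℝ) ≤ G.dist u v ∧ (G.dist u v : ℝ) ≤ c * d) ∧
    ∀ (C : ℕ) (f : V → Fin C),
      (∀ u v : V, u ≠ v → (d : ℝ) ≤ G.dist u v → (G.dist u v : ℝ) ≤ c * d →
        f u ≠ f v) →
      q * (q - 1) ^ (⌊c * d / 2⌋₊ - d / 2) ≤ C := by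
  obtain ⟨e, rfl⟩ := hd
  set m := ⌊c * ↑(e + e) / 2⌋₊
  have hcd : (0 : ℝ) ≤ c * ↑(e + e) / 2 := by positivity
  have hem : e ≤ m := Nat.le_floor (by push_cast; nlinarith)
  have hm : (2 * m : ℝ) ≤ c * ↑(e + e) := by linarith [Nat.floor_le hcd]
  obtain ⟨S, hcard, hS⟩ :=
    htree.exists_finset_card_eq_dist_mem_Icc hreg (by omega) (m - e) (e - 1)
  have hdist : ∀ u ∈ S, ∀ v ∈ S, u ≠ v →
      ((e + e : ℕ) : ℝ) ≤ G.dist u v ∧ (G.dist u v : ℝ) ≤ c * ↑(e + e) := by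
    intro u hu v hv huv
    obtain ⟨hlo, hhi⟩ := hS u hu v hv huv
    have hhi' : (G.dist u v : ℝ) ≤ 2 * m := mod_cast (by omega : G.dist u v ≤ 2 * m)
    exact ⟨mod_cast (by omega : e + e ≤ G.dist u v), hhi'.trans hm⟩
  have hcard' : S.card = q * (q - 1) ^ (m - (e + e) / 2) := by
    rw [hcard, show (e + e) / 2 = e by omega]
  refine ⟨⟨S, hcard', hdist⟩, fun C f hf => hcard' ▸ ?_⟩
  calc S.card ≤ (Finset.univ : Finset (Fin C)).card :=
        Finset.card_le_card_of_injOn f (fun _ _ => Finset.mem_univ _) fun u hu v hv huv => by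
          by_contra hne
          exact hf u v hne (hdist u hu v hv hne).1 (hdist u hu v hv hne).2 huv
    _ = C := by simp
end
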